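/- Regard 𝓔 as a function of θ with d_ij and d_jk held fixed. Then for all θ ∈ (0, π), d𝓔/dθ = m_k m_i (−H²/I_H² + 1/d_ki³) d_ij d_jk sin θ. -/

import Mathlib

/-- Third side from the law of cosines. -/
noncomputable def dki (dij djk θ : ℝ) : ℝ :=
  Real.sqrt (dij ^ 2 + djk ^ 2 - 2 * dij * djk * Real.cos θ)

/-- Moment of inertia about the rotation axis. -/
noncomputable def IH (mi mj mk IS dij djk θ : ℝ) : ℝ :=
  mi * mj * dij ^ 2 + mj * mk * djk ^ 2 + mk * mi * (dki dij djk θ) ^ 2 + IS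

/-- The amended potential `𝓔 = H²/(2 I_H) + U` as a function of
`(d_ij, d_jk, θ)`. -/
noncomputable def amended (mi mj mk IS H dij djk θ : ℝ) : ℝ :=
  H ^ 2 / (2 * IH mi mj mk IS dij djk θ)
    - (mi * mj / dij + mj * mk / djk + mk * mi / dki dij djk θ)

/-! The angle enters only through `d_ki² = d_ij² + d_jk² − 2 d_ij d_jk cos θ`, whose derivative
is `2 d_ij d_jk sin θ`. Since `I_H` is affine in `d_ki²` with slope `m_k m_i` and
`d_ki' = d_ij d_jk sin θ / d_ki`, the quotient rule applied to `H²/(2 I_H)` and to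
`m_k m_i / d_ki` produces the common factor `m_k m_i d_ij d_jk sin θ`. -/

open Real

theorem lawOfCosines_pos {a b θ : ℝ} (ha : 0 < a) (hb : 0 < b) (hθ : θ ∈ Set.Ioo 0 π) :
    0 < a ^ 2 + b ^ 2 - 2 * a * b * cos θ := by
  have hcos : cos θ < 1 := by
    simpa using cos_lt_cos_of_nonneg_of_le_pi le_rfl hθ.2.le hθ.1
  nlinarith [sq_nonneg (a - b), mul_pos ha hb]

theorem IH_pos {mi mj mk IS : ℝ} (hmi : 0 < mi) (hmj : 0 < mj) (hmk : 0 < mk) (hIS : 0 < IS)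
    (dij djk θ : ℝ) : 0 < IH mi mj mk IS dij djk θ := by
  unfold IH
  positivity

section LawOfCosines

variable (a b : ℝ)

theorem lawOfCosines_nonneg (θ : ℝ) : 0 ≤ a ^ 2 + b ^ 2 - 2 * a * b * cos θ := by
  -- twice the expression is `(1 + cos θ) (a - b)² + (1 - cos θ) (a + b)²`
  nlinarith [mul_nonneg (by linarith [neg_one_le_cos θ] : 0 ≤ 1 + cos θ) (sq_nonneg (a - b)),
    mul_nonneg (by linarith [cos_le_one θ] : 0 ≤ 1 - cos θ) (sq_nonneg (a + b))]

theorem hasDerivAt_lawOfCosines (θ : ℝ) :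
    HasDerivAt (fun t => a ^ 2 + b ^ 2 - 2 * a * b * cos t) (2 * a * b * sin θ) θ := by
  simpa using ((hasDerivAt_cos θ).const_mul (2 * a * b)).const_sub (a ^ 2 + b ^ 2)

theorem dki_sq (θ : ℝ) : dki a b θ ^ 2 = a ^ 2 + b ^ 2 - 2 * a * b * cos θ :=
  sq_sqrt (lawOfCosines_nonneg a b θ)

theorem hasDerivAt_dki_sq (θ : ℝ) :
    HasDerivAt (fun t => dki a b t ^ 2) (2 * a * b * sin θ) θ := by
  simpa only [dki_sq] using hasDerivAt_lawOfCosines a b θ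

theorem hasDerivAt_dki {θ : ℝ} (hθ : 0 < a ^ 2 + b ^ 2 - 2 * a * b * cos θ) :
    HasDerivAt (fun t => dki a b t) (a * b * sin θ / dki a b θ) θ := by
  refine ((hasDerivAt_lawOfCosines a b θ).sqrt hθ.ne').congr_deriv ?_
  unfold dki
  ring

end LawOfCosines

section Potential

variable (mi mj mk IS H dij djk : ℝ)

theorem hasDerivAt_IH (θ : ℝ) :
    HasDerivAt (fun t => IH mi mj mk IS dij djk t) (mk * mi * (2 * dij * djk * sin θ)) θ :=
  (((hasDerivAt_dki_sq dij djk θ).const_mul (mk * mi)).const_add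
    (mi * mj * dij ^ 2 + mj * mk * djk ^ 2)).add_const IS

theorem hasDerivAt_amended {θ : ℝ} (hI : IH mi mj mk IS dij djk θ ≠ 0)
    (hθ : 0 < dij ^ 2 + djk ^ 2 - 2 * dij * djk * cos θ) :
    HasDerivAt (fun t => amended mi mj mk IS H dij djk t)
      (mk * mi * (-(H ^ 2) / (IH mi mj mk IS dij djk θ) ^ 2 +
        1 / (dki dij djk θ) ^ 3) * dij * djk * sin θ) θ := by
  have hd : dki dij djk θ ≠ 0 := (sqrt_pos.2 hθ).ne'
  have hkin := (hasDerivAt_const θ (H ^ 2)).fun_div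
    ((hasDerivAt_IH mi mj mk IS dij djk θ).const_mul 2) (mul_ne_zero two_ne_zero hI)
  have hpot := (hasDerivAt_const θ (mk * mi)).fun_div (hasDerivAt_dki dij djk hθ) hd
  refine (hkin.fun_sub (hpot.const_add (mi * mj / dij + mj * mk / djk))).congr_deriv ?_
  field_simp
  ring

end Potential

theorem amended_deriv_theta_general
    (mi mj mk IS H dij djk : ℝ)
    (hmi : 0 < mi) (hmj : 0 < mj) (hmk : 0 < mk) (hIS : 0 < IS)
    (hdij : 0 < dij) (hdjk : 0 < djk) :
    ∀ θ ∈ Set.Ioo 0 Real.pi,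
      deriv (fun t => amended mi mj mk IS H dij djk t) θ =
        mk * mi * (-(H ^ 2) / (IH mi mj mk IS dij djk θ) ^ 2 +
            1 / (dki dij djk θ) ^ 3) * dij * djk * Real.sin θ := fun θ hθ =>
  (hasDerivAt_amended mi mj mk IS H dij djk (IH_pos hmi hmj hmk hIS dij djk θ).ne'
    (lawOfCosines_pos hdij hdjk hθ)).deriv

/-- First variation of the amended potential in the angle `θ`:
`d𝓔/dθ = m_k m_i (−H²/I_H² + 1/d_ki³) d_ij d_jk sin θ`. -/
theorem amended_deriv_theta
    (mi mj mk IS H dij djk : ℝ)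
    (hmi : 0 < mi) (hmj : 0 < mj) (hmk : 0 < mk) (hIS : 0 < IS) (hH : 0 ≤ H)
    (hdij : 0 < dij) (hdjk : 0 < djk) :
    ∀ θ ∈ Set.Ioo 0 Real.pi,
      deriv (fun t => amended mi mj mk IS H dij djk t) θ =
        mk * mi * (-(H ^ 2) / (IH mi mj mk IS dij djk θ) ^ 2 +
            1 / (dki dij djk θ) ^ 3) * dij * djk * Real.sin θ :=
  amended_deriv_theta_general mi mj mk IS H dij djk hmi hmj hmk hIS hdij hdjk
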